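/- arXiv:0905.2773 — 2 statements merged into one kernel-verified Lean document; each statement's English description precedes it below -/
import Mathlib

section
/- Let D be a bounded domain with C² boundary in a Riemannian manifold M, u, h ∈ C¹(D̄) with u ∈ C², h ∈ C², and λ ∈ ℝ. Then ∫_D (‖∇u‖² − λu²) Δh − 2∫_D Hess h(∇u, ∇u) − 2∫_D (Δu + λu)⟨∇h, ∇u⟩ = ∫_{∂D} (‖∇u‖² − λu²) ∂h/∂n − 2∫_{∂D} ⟨∇h, ∇u⟩ ∂u/∂n. -/
open MeasureTheory

noncomputable abbrev Euc (n : ℕ) := EuclideanSpace ℝ (Fin n)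

/-- Divergence of a vector field on `ℝⁿ`: `div X = ∑ᵢ ⟨DX(eᵢ), eᵢ⟩`. -/
noncomputable def ediv {n : ℕ} (X : Euc n → Euc n) (x : Euc n) : ℝ :=
  ∑ i, (inner ℝ (fderiv ℝ X x (EuclideanSpace.single i 1)) (EuclideanSpace.single i 1) : ℝ)

/-- Laplace–Beltrami operator (Euclidean): `Δu = div ∇u`. -/
noncomputable def lap {n : ℕ} (u : Euc n → ℝ) (x : Euc n) : ℝ :=
  ediv (fun y => gradient u y) x

/-- Hessian quadratic form: `Hess u (v,v) = ⟨D(∇u)(v), v⟩`. -/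
noncomputable def hessQ {n : ℕ} (u : Euc n → ℝ) (x v : Euc n) : ℝ :=
  (inner ℝ (fderiv ℝ (fun y => gradient u y) x v) v : ℝ)

/-!
Put `X₁ = (‖∇u‖² - λu²) ∇h` and `X₂ = ⟨∇h, ∇u⟩ ∇u`. By the product rule,
`div X₁ = (‖∇u‖² - λu²) Δh + 2 Hess u(∇h, ∇u) - 2λu ⟨∇h, ∇u⟩` and
`div X₂ = ⟨∇h, ∇u⟩ Δu + Hess h(∇u, ∇u) + Hess u(∇u, ∇h)`, so by symmetry of `Hess u` the
integrand on the left is pointwise `div X₁ - 2 div X₂`. The divergence theorem applied to `X₁`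
and `X₂` turns its integral into the boundary terms; boundedness of `D` makes every interior
integrand integrable, so the integral may be split term by term.
-/

open InnerProductSpace

section Gradient

variable {F : Type*} [NormedAddCommGroup F] [InnerProductSpace ℝ F] [CompleteSpace F]
  {u : F → ℝ} {x : F}

theorem ContDiffAt.gradient {k : WithTop ℕ∞} (hu : ContDiffAt ℝ (k + 1) u x) :
    ContDiffAt ℝ k (gradient u) x :=
  (toDual ℝ F).symm.contDiff.contDiffAt.comp x (hu.fderiv_right le_rfl)

theorem ContDiff.gradient {k : WithTop ℕ∞} (hu : ContDiff ℝ (k + 1) u) :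
    ContDiff ℝ k (gradient u) :=
  contDiff_iff_contDiffAt.2 fun _ => hu.contDiffAt.gradient

theorem inner_fderiv_gradient (hu : DifferentiableAt ℝ (fderiv ℝ u) x) (v w : F) :
    ⟪fderiv ℝ (gradient u) x v, w⟫_ℝ = fderiv ℝ (fderiv ℝ u) x v w := by
  change ⟪fderiv ℝ ((toDual ℝ F).symm ∘ fderiv ℝ u) x v, w⟫_ℝ = _
  rw [fderiv_comp x (toDual ℝ F).symm.differentiableAt hu, LinearIsometryEquiv.fderiv]
  exact toDual_symm_apply

theorem inner_fderiv_gradient_comm (hu : ContDiffAt ℝ 2 u x) (v w : F) :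
    ⟪fderiv ℝ (gradient u) x v, w⟫_ℝ = ⟪fderiv ℝ (gradient u) x w, v⟫_ℝ := by
  have hdu : DifferentiableAt ℝ (fderiv ℝ u) x :=
    (hu.fderiv_right (m := 1) le_rfl).differentiableAt one_ne_zero
  rw [inner_fderiv_gradient hdu, inner_fderiv_gradient hdu,
    (hu.isSymmSndFDerivAt (by simp)).eq]

end Gradient

section Divergence

variable {n : ℕ}

theorem ediv_smul {f : Euc n → ℝ} {X : Euc n → Euc n} {x : Euc n}
    (hf : DifferentiableAt ℝ f x) (hX : DifferentiableAt ℝ X x) :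
    ediv (fun y => f y • X y) x = f x * ediv X x + fderiv ℝ f x (X x) := by
  have hX_sum : fderiv ℝ f x (X x) = ∑ i, fderiv ℝ f x (EuclideanSpace.single i 1) * X x i := by
    conv_lhs => rw [← (EuclideanSpace.basisFun (Fin n) ℝ).sum_repr (X x)]
    simp [mul_comm]
  simp only [ediv, fderiv_fun_smul hf hX, add_apply, smul_apply,
    ContinuousLinearMap.smulRight_apply, inner_add_left, real_inner_smul_left,
    Finset.sum_add_distrib, Finset.mul_sum, hX_sum]
  simp [EuclideanSpace.inner_single_right]

theorem continuous_ediv {X : Euc n → Euc n} (hX : ContDiff ℝ 1 X) : Continuous (ediv X) :=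
  continuous_finsetSum _ fun _ _ =>
    ((hX.continuous_fderiv one_ne_zero).clm_apply continuous_const).inner continuous_const

theorem continuous_hessQ {h : Euc n → ℝ} {v : Euc n → Euc n} (hh : ContDiff ℝ 2 h)
    (hv : Continuous v) : Continuous fun x => hessQ h x (v x) :=
  ((hh.gradient.continuous_fderiv one_ne_zero).clm_apply hv).inner hv

theorem contDiff_norm_sq_gradient_sub_mul_sq {u : Euc n → ℝ} (lam : ℝ) (hu : ContDiff ℝ 2 u) :
    ContDiff ℝ 1 fun x => ‖gradient u x‖ ^ 2 - lam * u x ^ 2 :=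
  (hu.gradient.norm_sq ℝ).sub (contDiff_const.mul ((hu.of_le one_le_two).pow 2))

theorem ediv_escobarFreire {u h : Euc n → ℝ} {x : Euc n} (lam : ℝ) (hu : ContDiffAt ℝ 2 u x)
    (hh : DifferentiableAt ℝ (gradient h) x) :
    ediv (fun y => (‖gradient u y‖ ^ 2 - lam * u y ^ 2) • gradient h y) x
        - 2 * ediv (fun y => ⟪gradient h y, gradient u y⟫_ℝ • gradient u y) x
      = (‖gradient u x‖ ^ 2 - lam * u x ^ 2) * lap h x - 2 * hessQ h x (gradient u x)
        - 2 * (lap u x + lam * u x) * ⟪gradient h x, gradient u x⟫_ℝ := by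
  have hdu : DifferentiableAt ℝ u x := hu.differentiableAt two_ne_zero
  have hdGu : DifferentiableAt ℝ (gradient u) x :=
    (hu.gradient (k := 1)).differentiableAt one_ne_zero
  have hdf : DifferentiableAt ℝ (fun y => ‖gradient u y‖ ^ 2 - lam * u y ^ 2) x :=
    (hdGu.norm_sq ℝ).sub ((hdu.pow 2).const_mul lam)
  have hdg : DifferentiableAt ℝ (fun y => ⟪gradient h y, gradient u y⟫_ℝ) x := hh.inner ℝ hdGu
  have hDf : fderiv ℝ (fun y => ‖gradient u y‖ ^ 2 - lam * u y ^ 2) x (gradient h x)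
      = 2 * ⟪fderiv ℝ (gradient u) x (gradient h x), gradient u x⟫_ℝ
        - 2 * lam * u x * ⟪gradient h x, gradient u x⟫_ℝ := by
    rw [((hdGu.hasFDerivAt.norm_sq).fun_sub ((hdu.hasFDerivAt.pow 2).const_mul lam)).fderiv]
    simp only [Nat.add_one_sub_one, pow_one, nsmul_eq_mul, Nat.cast_ofNat, sub_apply, smul_apply,
      ContinuousLinearMap.comp_apply, coe_innerSL_apply, inner_gradient_left, smul_eq_mul,
      inner_gradient_right, Real.ringHom_apply]
    ring
  -- Symmetry of `Hess u` lets this term cancel against the one in `hDf`.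
  have hDg : fderiv ℝ (fun y => ⟪gradient h y, gradient u y⟫_ℝ) x (gradient u x)
      = ⟪fderiv ℝ (gradient u) x (gradient h x), gradient u x⟫_ℝ
        + hessQ h x (gradient u x) := by
    rw [fderiv_inner_apply ℝ hh hdGu, real_inner_comm, inner_fderiv_gradient_comm hu]
    rfl
  rw [ediv_smul hdf hh, ediv_smul hdg hdGu, hDf, hDg]
  unfold lap
  ring

theorem setIntegral_escobarFreire {D : Set (Euc n)} (hD : Bornology.IsBounded D)
    {u h : Euc n → ℝ} (lam : ℝ) (hu : ContDiff ℝ 2 u) (hh : ContDiff ℝ 2 h) :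
    ((∫ x in D, (‖gradient u x‖ ^ 2 - lam * u x ^ 2) * lap h x)
        - 2 * ∫ x in D, hessQ h x (gradient u x))
        - 2 * ∫ x in D, (lap u x + lam * u x) * ⟪gradient h x, gradient u x⟫_ℝ
      = (∫ x in D, ediv (fun y => (‖gradient u y‖ ^ 2 - lam * u y ^ 2) • gradient h y) x)
        - 2 * ∫ x in D, ediv (fun y => ⟪gradient h y, gradient u y⟫_ℝ • gradient u y) x := by
  have hGu : ContDiff ℝ 1 (gradient u) := hu.gradient
  have hGh : ContDiff ℝ 1 (gradient h) := hh.gradient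
  have hf := contDiff_norm_sq_gradient_sub_mul_sq lam hu
  have hg : ContDiff ℝ 1 fun x => ⟪gradient h x, gradient u x⟫_ℝ := hGh.inner ℝ hGu
  have integrableOn {F : Euc n → ℝ} (hF : Continuous F) : IntegrableOn F D :=
    (hF.continuousOn.integrableOn_compact hD.isCompact_closure).mono_set subset_closure
  have hA : IntegrableOn (fun x => (‖gradient u x‖ ^ 2 - lam * u x ^ 2) * lap h x) D :=
    integrableOn (hf.continuous.mul (continuous_ediv hGh))
  have hB : IntegrableOn (fun x => hessQ h x (gradient u x)) D :=
    integrableOn (continuous_hessQ hh hGu.continuous)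
  have hC : IntegrableOn (fun x => (lap u x + lam * u x) * ⟪gradient h x, gradient u x⟫_ℝ) D :=
    integrableOn (((continuous_ediv hGu).add (continuous_const.mul hu.continuous)).mul
      hg.continuous)
  have hX₁ : IntegrableOn
      (ediv fun y => (‖gradient u y‖ ^ 2 - lam * u y ^ 2) • gradient h y) D :=
    integrableOn (continuous_ediv (hf.smul hGh))
  have hX₂ : IntegrableOn (ediv fun y => ⟪gradient h y, gradient u y⟫_ℝ • gradient u y) D :=
    integrableOn (continuous_ediv (hg.smul hGu))
  rw [← integral_const_mul, ← integral_const_mul, ← integral_const_mul,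
    ← integral_sub hA (hB.const_mul 2), ← integral_sub (Integrable.sub' hA (hB.const_mul 2))
      (hC.const_mul 2), ← integral_sub hX₁ (hX₂.const_mul 2)]
  congr 1 with x
  rw [ediv_escobarFreire lam hu.contDiffAt (hGh.differentiable one_ne_zero x)]
  ring

end Divergence

theorem stmt_14_general (n : ℕ) (D : Set (Euc n))
    (hDb : Bornology.IsBounded D)
    (σ : Measure (Euc n)) (N : Euc n → Euc n)
    (hdiv : ∀ X : Euc n → Euc n, ContDiff ℝ 1 X →
      ∫ x in D, ediv X x = ∫ x in frontier D, (inner ℝ (X x) (N x) : ℝ) ∂σ)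
    (u h : Euc n → ℝ) (hu : ContDiff ℝ 2 u) (hh : ContDiff ℝ 2 h) (lam : ℝ) :
    ((∫ x in D, (‖gradient u x‖ ^ 2 - lam * u x ^ 2) * lap h x)
        - 2 * ∫ x in D, hessQ h x (gradient u x))
        - 2 * ∫ x in D, (lap u x + lam * u x) * (inner ℝ (gradient h x) (gradient u x) : ℝ)
      = (∫ x in frontier D,
            (‖gradient u x‖ ^ 2 - lam * u x ^ 2) * (inner ℝ (gradient h x) (N x) : ℝ) ∂σ)
        - 2 * ∫ x in frontier D,
            (inner ℝ (gradient h x) (gradient u x) : ℝ) * (inner ℝ (gradient u x) (N x) : ℝ) ∂σ := by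
  have hGu : ContDiff ℝ 1 (gradient u) := hu.gradient
  have hGh : ContDiff ℝ 1 (gradient h) := hh.gradient
  have hX₁ : ContDiff ℝ 1 fun x => (‖gradient u x‖ ^ 2 - lam * u x ^ 2) • gradient h x :=
    (contDiff_norm_sq_gradient_sub_mul_sq lam hu).smul hGh
  have hX₂ : ContDiff ℝ 1 fun x => ⟪gradient h x, gradient u x⟫_ℝ • gradient u x :=
    (hGh.inner ℝ hGu).smul hGu
  rw [setIntegral_escobarFreire hDb lam hu hh, hdiv _ hX₁, hdiv _ hX₂]
  simp only [real_inner_smul_left]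

/-- The Escobar–Freire integral identity on a bounded domain `D` with `C²` boundary
(here in the Riemannian manifold `ℝⁿ`): assuming the divergence theorem for `D` with
boundary measure `σ` and outward unit normal `N`, for `u, h ∈ C²(D̄)` and `λ ∈ ℝ`,
`∫_D (‖∇u‖²−λu²)Δh − 2∫_D Hess h(∇u,∇u) − 2∫_D (Δu+λu)⟨∇h,∇u⟩
  = ∫_{∂D} (‖∇u‖²−λu²)∂h/∂n − 2∫_{∂D} ⟨∇h,∇u⟩ ∂u/∂n`. -/
theorem stmt_14 (n : ℕ) (D : Set (Euc n)) (hD : IsOpen D)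
    (hDb : Bornology.IsBounded D)
    (σ : Measure (Euc n)) (N : Euc n → Euc n)
    (hN : ∀ x ∈ frontier D, ‖N x‖ = 1)
    (hdiv : ∀ X : Euc n → Euc n, ContDiff ℝ 1 X →
      ∫ x in D, ediv X x = ∫ x in frontier D, (inner ℝ (X x) (N x) : ℝ) ∂σ)
    (u h : Euc n → ℝ) (hu : ContDiff ℝ 2 u) (hh : ContDiff ℝ 2 h) (lam : ℝ) :
    ((∫ x in D, (‖gradient u x‖ ^ 2 - lam * u x ^ 2) * lap h x)
        - 2 * ∫ x in D, hessQ h x (gradient u x))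
        - 2 * ∫ x in D, (lap u x + lam * u x) * (inner ℝ (gradient h x) (gradient u x) : ℝ)
      = (∫ x in frontier D,
            (‖gradient u x‖ ^ 2 - lam * u x ^ 2) * (inner ℝ (gradient h x) (N x) : ℝ) ∂σ)
        - 2 * ∫ x in frontier D,
            (inner ℝ (gradient h x) (gradient u x) : ℝ) * (inner ℝ (gradient u x) (N x) : ℝ) ∂σ :=
  stmt_14_general n D hDb σ N hdiv u h hu hh lam
end

section
/- Let f : ℝⁿ → ℝ be C¹ and fix p ∈ ℝⁿ and a unit vector p₀ ∈ ℝⁿ. Suppose γ(t) = f(t p₀ + p) has derivative γ'(t) converging to a finite limit as t → ∞. Then along the curve t ↦ (t p₀ + p, γ(t)) in the graph Γ_f, the quantity ⟨∇̃r̃, ν⟩ tends to 0 as t → ∞, where r̃ is the extrinsic distance to (p, f(p)) and ν the unit normal of the graph. -/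
/-!
Let γ(t) = f(t p₀ + p), let u = (t p₀, γ(t) - γ(0)) be the chord from (p, f p) to the point of the
curve, and N = (-∇f, 1) the unnormalised normal. Then ⟨u, N⟩ = γ(t) - γ(0) - t γ'(t), while
‖u‖ ≥ t and ‖N‖ ≥ 1, so |⟨∇̃r̃, ν⟩| ≤ |(γ(t) - γ(0))/t - γ'(t)|. By the mean value theorem
γ' → L forces γ(t)/t → L, so this bound tends to 0.
-/

open Filter Topology Asymptotics

theorem isLittleO_id_atTop_of_hasDerivAt_tendsto_zero {E : Type*} [NormedAddCommGroup E]
    [NormedSpace ℝ E] {h h' : ℝ → E} (hh : ∀ t, HasDerivAt h (h' t) t)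
    (hh' : Tendsto h' atTop (𝓝 0)) : h =o[atTop] id := by
  refine isLittleO_iff.2 fun ε hε => ?_
  obtain ⟨T, hT⟩ := eventually_atTop.1 <|
    (tendsto_zero_iff_norm_tendsto_zero.1 hh').eventually (eventually_le_nhds (half_pos hε))
  set T₀ := max T 0
  have hmvt : ∀ t ≥ T₀, ‖h t - h T₀‖ ≤ ε / 2 * ‖t - T₀‖ := fun t ht =>
    (convex_Ici T₀).norm_image_sub_le_of_norm_hasDerivWithin_le
      (fun s _ => (hh s).hasDerivWithinAt) (fun s hs => hT s (le_of_max_le_left hs))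
      Set.self_mem_Ici ht
  filter_upwards [eventually_ge_atTop T₀, eventually_ge_atTop (2 * ‖h T₀‖ / ε)] with t htT ht
  have hT₀ : 0 ≤ T₀ := le_max_right T 0
  have hhT : ‖h T₀‖ ≤ ε / 2 * t := by
    rw [div_le_iff₀ hε] at ht; linarith
  calc ‖h t‖ ≤ ‖h T₀‖ + ‖h t - h T₀‖ := norm_le_norm_add_norm_sub' _ _
    _ ≤ ε / 2 * t + ε / 2 * (t - T₀) := by
      gcongr
      simpa [Real.norm_eq_abs, abs_of_nonneg (sub_nonneg.2 htT)] using hmvt t htT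
    _ ≤ ε * ‖id t‖ := by
      rw [id, Real.norm_eq_abs, abs_of_nonneg (hT₀.trans htT)]; nlinarith

theorem tendsto_div_atTop_of_hasDerivAt_tendsto {γ γ' : ℝ → ℝ} {L : ℝ}
    (hγ : ∀ t, HasDerivAt γ (γ' t) t) (hγ' : Tendsto γ' atTop (𝓝 L)) :
    Tendsto (fun t => γ t / t) atTop (𝓝 L) := by
  have hlin : (fun t => γ t - L * t) =o[atTop] id :=
    isLittleO_id_atTop_of_hasDerivAt_tendsto_zero (h' := fun t => γ' t - L)
      (fun t => ((hγ t).sub ((hasDerivAt_id t).const_mul L)).congr_deriv (by simp))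
      (by simpa using hγ'.sub_const L)
  refine (zero_add L ▸ hlin.tendsto_div_nhds_zero.add_const L).congr' ?_
  filter_upwards [eventually_ne_atTop 0] with t ht
  simp only [id]
  field_simp
  ring

variable {F : Type*} [NormedAddCommGroup F] [InnerProductSpace ℝ F]

theorem HasGradientAt.hasDerivAt_comp_smul_add [CompleteSpace F] {f : F → ℝ} {g v p : F} {t : ℝ}
    (hf : HasGradientAt f g (t • v + p)) :
    HasDerivAt (fun s : ℝ => f (s • v + p)) (inner ℝ g v) t := by
  have hline : HasDerivAt (fun s : ℝ => s • v + p) v t := by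
    simpa using ((hasDerivAt_id t).smul_const v).add_const p
  have := hf.hasFDerivAt.comp_hasDerivAt t hline
  rw [InnerProductSpace.toDual_apply_apply] at this
  exact this

theorem norm_fst_mul_abs_inner_unit_normal_le (x g : F) (a : ℝ) :
    ‖x‖ * |inner ℝ
      ((1 / ‖(WithLp.equiv 2 (F × ℝ)).symm (x, a)‖) • (WithLp.equiv 2 (F × ℝ)).symm (x, a))
      ((1 / Real.sqrt (1 + ‖g‖ ^ 2)) • (WithLp.equiv 2 (F × ℝ)).symm (-g, 1))| ≤
      |a - inner ℝ x g| := by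
  set u := (WithLp.equiv 2 (F × ℝ)).symm (x, a)
  have hinner : inner ℝ u ((WithLp.equiv 2 (F × ℝ)).symm (-g, 1)) = a - inner ℝ x g := by
    simp [u, WithLp.prod_inner_apply]; ring
  have hu : ‖x‖ / ‖u‖ ≤ 1 := div_le_one_of_le₀ (WithLp.norm_fst_le F u) (norm_nonneg u)
  have hsqrt : 1 / Real.sqrt (1 + ‖g‖ ^ 2) ≤ 1 :=
    div_le_one_of_le₀ (Real.one_le_sqrt.2 (le_add_of_nonneg_right (by positivity))) (by positivity)
  rw [real_inner_smul_left, real_inner_smul_right, hinner, abs_mul, abs_mul,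
    abs_of_nonneg (by positivity : 0 ≤ 1 / ‖u‖),
    abs_of_nonneg (by positivity : 0 ≤ 1 / Real.sqrt (1 + ‖g‖ ^ 2))]
  calc ‖x‖ * (1 / ‖u‖ * (1 / Real.sqrt (1 + ‖g‖ ^ 2) * |a - inner ℝ x g|))
      = ‖x‖ / ‖u‖ * (1 / Real.sqrt (1 + ‖g‖ ^ 2)) * |a - inner ℝ x g| := by ring
    _ ≤ 1 * 1 * |a - inner ℝ x g| := by gcongr
    _ = |a - inner ℝ x g| := by ring

/-- Along a straight-line direction `p₀` (a unit vector) in which `γ(t) = f(tp₀+p)`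
has derivative converging to a finite limit, the normal component `⟨∇̃r̃, ν⟩` of the
ambient gradient of the extrinsic distance `r̃` (to `(p, f p)`) on the graph `Γ_f`
tends to `0` as `t → ∞`. -/
theorem stmt_17 (n : ℕ) (f : Euc n → ℝ) (hf : Differentiable ℝ f)
    (p p₀ : Euc n) (hp₀ : ‖p₀‖ = 1) (L : ℝ)
    (hd : Tendsto (deriv fun t : ℝ => f (t • p₀ + p)) atTop (nhds L)) :
    Tendsto (fun t : ℝ =>
        (inner ℝ
          ((1 / ‖(WithLp.equiv 2 (Euc n × ℝ)).symm
              (t • p₀ + p - p, f (t • p₀ + p) - f p)‖) •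
            (WithLp.equiv 2 (Euc n × ℝ)).symm (t • p₀ + p - p, f (t • p₀ + p) - f p))
          ((1 / Real.sqrt (1 + ‖gradient f (t • p₀ + p)‖ ^ 2)) •
            (WithLp.equiv 2 (Euc n × ℝ)).symm (-gradient f (t • p₀ + p), 1)) : ℝ))
      atTop (nhds 0) := by
  set γ' : ℝ → ℝ := fun t => inner ℝ (gradient f (t • p₀ + p)) p₀
  have hγ (t : ℝ) : HasDerivAt (fun s : ℝ => f (s • p₀ + p)) (γ' t) t :=
    (hf _).hasGradientAt.hasDerivAt_comp_smul_add
  have hγ' : Tendsto γ' atTop (𝓝 L) := by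
    rwa [show deriv (fun s : ℝ => f (s • p₀ + p)) = γ' from funext fun t => (hγ t).deriv] at hd
  have hdefect : Tendsto (fun t => |(f (t • p₀ + p) - f p) / t - γ' t|) atTop (𝓝 0) := by
    simpa using ((tendsto_div_atTop_of_hasDerivAt_tendsto
      (fun t => (hγ t).sub_const (f p)) hγ').sub hγ').abs
  refine squeeze_zero_norm' ?_ hdefect
  filter_upwards [eventually_gt_atTop 0] with t ht
  have hnorm : ‖t • p₀ + p - p‖ = t := by
    rw [add_sub_cancel_right, norm_smul, hp₀, mul_one, Real.norm_of_nonneg ht.le]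
  have hinner : inner ℝ (t • p₀ + p - p) (gradient f (t • p₀ + p)) = t * γ' t := by
    rw [add_sub_cancel_right, real_inner_smul_left, real_inner_comm]
  have key := norm_fst_mul_abs_inner_unit_normal_le (t • p₀ + p - p) (gradient f (t • p₀ + p))
    (f (t • p₀ + p) - f p)
  rw [hnorm, hinner] at key
  rw [Real.norm_eq_abs, div_sub' ht.ne', abs_div, abs_of_pos ht, le_div_iff₀ ht, mul_comm]
  exact key
end
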